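/- For n ≥ 1 and 0 ≤ g ≤ n−1, the R^g-vertex-connectivity of HCN_n equals 2^g(n+1−g): there exists an R^g-vertex-cut of this size, and every R^g-vertex-cut has at least this size. -/

import Mathlib

/-- Vertices of the hierarchical cubic network: pairs (cluster label, position). -/
abbrev HVert (n : ℕ) := (Fin n → Bool) × (Fin n → Bool)

/-- The hierarchical cubic network HCN_n. Within a cluster (same first coordinate),
two vertices are adjacent iff their second coordinates differ in exactly one bit.
Crossing edges: (x,y) with x ≠ y is adjacent to (y,x); (x,x) is adjacent to (x̄,x̄). -/
def HCN (n : ℕ) : SimpleGraph (HVert n) :=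
  SimpleGraph.fromRel (fun u v =>
    (u.1 = v.1 ∧ (Finset.univ.filter (fun i => u.2 i ≠ v.2 i)).card = 1) ∨
    (u.1 ≠ u.2 ∧ v = (u.2, u.1)) ∨
    (u.1 = u.2 ∧ v = (fun i => !u.1 i, fun i => !u.2 i)))

/-- `u` and `v` are joined by a crossing edge of HCN_n. -/
def IsCrossing (n : ℕ) (u v : HVert n) : Prop :=
  ((u.1 ≠ u.2 ∧ v = (u.2, u.1)) ∨ (u.1 = u.2 ∧ v = (fun i => !u.1 i, fun i => !u.2 i))) ∨
  ((v.1 ≠ v.2 ∧ u = (v.2, v.1)) ∨ (v.1 = v.2 ∧ u = (fun i => !v.1 i, fun i => !v.2 i)))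

/-- `S` is an R^g-vertex-cut of HCN_n: removing `S` disconnects the graph, and
every remaining vertex keeps at least `g` neighbors among the remaining vertices. -/
def IsRgCut (n g : ℕ) (S : Set (HVert n)) : Prop :=
  ¬ ((HCN n).induce Sᶜ).Connected ∧
    ∀ v ∉ S, g ≤ (((HCN n).neighborSet v) \ S).ncard

/-!
A `g`-dimensional subcube `Q` of one cluster has `2 ^ g * (n - g)` neighbours in its cluster
and `2 ^ g` partners across crossing edges; removing these separates `Q`, and since at most two
crossing edges join two clusters, every other vertex keeps `g` neighbours.

Conversely, let `B` be a union of components of `HCN_n - S` and `W` the rest. Every vertex has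
a single crossing edge, so inside a cluster `B` and `W` induce subgraphs of minimum degree
`g - 1` of the `n`-cube, and two isoperimetric facts about the cube, both proved by splitting
along a coordinate, apply: a nonempty set of minimum degree `g` has a closed neighbourhood of at
least `2 ^ g * (n + 1 - g)` vertices, and two sets of minimum degree `g` at distance at least two
leave `2 ^ g * (n - g)` vertices uncovered. If `B` lies in one cluster, its crossing edges end in
`S`, so its fibre has minimum degree `g` and `S` holds its boundary there together with one
partner per vertex of `B`. Otherwise each cluster met by both sides holds
`2 ^ (g - 1) * (n + 1 - g)` vertices of `S`, a cluster met by neither lies in `S`, and the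
crossing edge between a cluster met only by `B` and one met only by `W` must be blocked by `S`.
-/

open Finset
open scoped symmDiff

lemma two_pow_mul_sub_le_two_pow_pred (g m : ℕ) : 2 ^ g * (m - g) ≤ 2 ^ (m - 1) := by
  rcases le_or_gt m g with hmg | hgm
  · simp [Nat.sub_eq_zero_of_le hmg]
  · have hk : m - g ≤ 2 ^ (m - g - 1) := by
      have := Nat.lt_two_pow_self (n := m - g - 1)
      omega
    calc 2 ^ g * (m - g) ≤ 2 ^ g * 2 ^ (m - g - 1) := Nat.mul_le_mul_left _ hk
      _ = 2 ^ (m - 1) := by rw [← pow_add]; congr 1; omega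

lemma two_pow_mul_succ_sub_le (g : ℕ) {m : ℕ} (hm : 1 ≤ m) :
    2 ^ g * (m + 1 - g) ≤ 2 * (2 ^ (g - 1) * (m - (g - 1))) := by
  rcases g with _ | g
  · simp only [pow_zero, one_mul, Nat.zero_sub, Nat.sub_zero]
    omega
  · rw [Nat.add_sub_cancel, pow_succ, show m + 1 - (g + 1) = m - g by omega]
    exact le_of_eq (by ring)

lemma add_add_two_pow_mul_le {g dA dW m a w : ℕ} (hgA : g ≤ dA) (hgW : g ≤ dW)
    (hd : dA + dW ≤ m) (ha : 2 ^ g ≤ a) (hw : 2 ^ g ≤ w) (ha2 : 0 < dA → 2 ≤ a)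
    (hw2 : 0 < dW → 2 ≤ w) (haA : a ≤ 2 ^ dA) (hwW : w ≤ 2 ^ dW)
    (hfa : a + w + a * (m - dA) ≤ 2 ^ m) (hfw : a + w + w * (m - dW) ≤ 2 ^ m) :
    a + w + 2 ^ g * (m - g) ≤ 2 ^ m := by
  wlog hle : dA ≤ dW generalizing dA dW a w
  · have := this hgW hgA (by omega) hw ha hw2 ha2 hwW haA (by omega) (by omega) (by omega)
    omega
  rcases eq_or_lt_of_le hgA with rfl | hgA'
  · have := Nat.mul_le_mul_right (m - g) ha
    omega
  rcases g with _ | g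
  · have := Nat.mul_le_mul_right (m - dA) (ha2 hgA')
    omega
  · have hpow : 2 ^ dA + 2 ^ dW ≤ 2 ^ (m - 1) := by
      calc 2 ^ dA + 2 ^ dW ≤ 2 ^ dW + 2 ^ dW := by gcongr; omega
        _ = 2 ^ (dW + 1) := by ring
        _ ≤ 2 ^ (m - 1) := Nat.pow_le_pow_right (by norm_num) (by omega)
    have := two_pow_mul_sub_le_two_pow_pred (g + 1) m
    have : 2 ^ (m - 1) + 2 ^ (m - 1) = 2 ^ m := by
      rw [← two_mul, ← pow_succ']; congr 1; omega
    omega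

lemma two_pow_mul_succ_sub_le_mul_add {g n p q m : ℕ} (hn : 1 ≤ n) (hp : 2 ≤ p + m)
    (hq : 2 ≤ q + m) (hsum : p + q + m = 2 ^ n) :
    2 ^ g * (n + 1 - g) ≤ p * q + m * (2 ^ (g - 1) * (n - (g - 1))) := by
  have hhalf := two_pow_mul_succ_sub_le g hn
  rcases m with _ | _ | m
  · have := two_pow_mul_sub_le_two_pow_pred g (n + 1)
    obtain ⟨p, rfl⟩ : ∃ p', p = p' + 2 := ⟨p - 2, by omega⟩
    obtain ⟨q, rfl⟩ : ∃ q', q = q' + 2 := ⟨q - 2, by omega⟩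
    simp only [Nat.add_sub_cancel] at this
    nlinarith
  · have hn2 : 2 ≤ n := by
      by_contra h
      obtain rfl : n = 1 := by omega
      omega
    have hpow : 2 ^ (n - 1) + 2 ≤ 2 ^ n := by
      have : 2 ≤ 2 ^ (n - 1) := by
        calc 2 = 2 ^ 1 := rfl
          _ ≤ 2 ^ (n - 1) := Nat.pow_le_pow_right (by norm_num) (by omega)
      have : 2 ^ n = 2 * 2 ^ (n - 1) := by rw [← pow_succ']; congr 1; omega
      omega
    have := two_pow_mul_sub_le_two_pow_pred (g - 1) n
    obtain ⟨p, rfl⟩ : ∃ p', p = p' + 1 := ⟨p - 1, by omega⟩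
    obtain ⟨q, rfl⟩ : ∃ q', q = q' + 1 := ⟨q - 1, by omega⟩
    nlinarith
  · have := Nat.mul_le_mul_right (2 ^ (g - 1) * (n - (g - 1))) (show 2 ≤ m + 1 + 1 by omega)
    nlinarith

namespace Hypercube

variable {α : Type*} [DecidableEq α] {U : Finset α} {A W : Finset (Finset α)} {g : ℕ} {i : α}

lemma mem_symmDiff_singleton_self (a : α) (s : Finset α) : a ∈ s ∆ {a} ↔ a ∉ s := by
  simp [mem_symmDiff]

lemma mem_symmDiff_singleton_of_ne {a b : α} (h : b ≠ a) (s : Finset α) :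
    b ∈ s ∆ {a} ↔ b ∈ s := by
  simp [mem_symmDiff, h]

lemma symmDiff_singleton_ne (s : Finset α) (a : α) : s ∆ {a} ≠ s := fun h => by
  simpa [h] using mem_symmDiff_singleton_self a s

lemma symmDiff_singleton_subset {s : Finset α} (hs : s ⊆ U) {a : α} (ha : a ∈ U) :
    s ∆ {a} ⊆ U :=
  symmDiff_subset_union.trans (union_subset hs (singleton_subset_iff.2 ha))

/-- The cube on `U` has the subsets of `U` as vertices, `s` being adjacent to `s ∆ {a}` for
`a ∈ U`. -/
def HasMinDegree (U : Finset α) (g : ℕ) (A : Finset (Finset α)) : Prop :=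
  ∀ s ∈ A, g ≤ #{a ∈ U | s ∆ {a} ∈ A}

def activeCoords (U : Finset α) (A : Finset (Finset α)) : Finset α :=
  {i ∈ U | (∃ s ∈ A, i ∈ s) ∧ ∃ s ∈ A, i ∉ s}

lemma activeCoords_subset : activeCoords U A ⊆ U := filter_subset _ U

lemma HasMinDegree.le_card (h : HasMinDegree U g A) (hA : A.Nonempty) : g ≤ #U := by
  obtain ⟨s, hs⟩ := hA
  exact (h s hs).trans (card_filter_le _ _)

lemma HasMinDegree.filter_erase (h : HasMinDegree U g A) {p : Finset α → Prop} [DecidablePred p]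
    (hp : ∀ s a, a ≠ i → (p (s ∆ {a}) ↔ p s)) :
    HasMinDegree (U.erase i) (g - 1) (A.filter p) := by
  intro s hs
  rw [mem_filter] at hs
  have hsub :
      {a ∈ U | s ∆ {a} ∈ A}.erase i ⊆ {a ∈ U.erase i | s ∆ {a} ∈ A.filter p} := by
    intro a ha
    simp only [mem_erase, mem_filter] at ha ⊢
    exact ⟨⟨ha.1, ha.2.1⟩, ha.2.2, (hp s a ha.1).2 hs.2⟩
  have := h s hs.1
  have := pred_card_le_card_erase (s := {a ∈ U | s ∆ {a} ∈ A}) (a := i)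
  have := card_le_card hsub
  omega

lemma HasMinDegree.filter_mem (h : HasMinDegree U g A) :
    HasMinDegree (U.erase i) (g - 1) (A.filter (i ∈ ·)) :=
  h.filter_erase fun s _ ha => mem_symmDiff_singleton_of_ne (Ne.symm ha) s

lemma HasMinDegree.filter_notMem (h : HasMinDegree U g A) :
    HasMinDegree (U.erase i) (g - 1) (A.filter (i ∉ ·)) :=
  h.filter_erase fun s _ ha => not_congr (mem_symmDiff_singleton_of_ne (Ne.symm ha) s)

lemma HasMinDegree.erase_of_forall_notMem (h : HasMinDegree U g A)
    (hi : ∀ s ∈ A, s ∆ {i} ∉ A) : HasMinDegree (U.erase i) g A := by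
  intro s hs
  refine (h s hs).trans (card_le_card fun a ha => ?_)
  simp only [mem_filter, mem_erase] at ha ⊢
  exact ⟨⟨fun hai => hi s hs (hai ▸ ha.2), ha.1⟩, ha.2⟩

lemma HasMinDegree.image_symmDiff (h : HasMinDegree U g A) (i : α) :
    HasMinDegree U g (A.image (· ∆ {i})) := by
  intro _ hs
  obtain ⟨s, hsA, rfl⟩ := mem_image.1 hs
  refine (h s hsA).trans (card_le_card fun a ha => ?_)
  simp only [mem_filter, mem_image] at ha ⊢
  exact ⟨ha.1, s ∆ {a}, ha.2, symmDiff_right_comm ..⟩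

lemma mem_activeCoords_of_symmDiff_mem {s : Finset α} (hi : i ∈ U) (hs : s ∈ A)
    (his : s ∆ {i} ∈ A) : i ∈ activeCoords U A := by
  rw [activeCoords, mem_filter]
  by_cases h : i ∈ s
  · exact ⟨hi, ⟨s, hs, h⟩, s ∆ {i}, his, by rwa [mem_symmDiff_singleton_self, not_not]⟩
  · exact ⟨hi, ⟨s ∆ {i}, his, (mem_symmDiff_singleton_self i s).2 h⟩, s, hs, h⟩

lemma filter_mem_nonempty (hi : i ∈ activeCoords U A) : (A.filter (i ∈ ·)).Nonempty := by
  obtain ⟨s, hs, his⟩ := (mem_filter.1 hi).2.1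
  exact ⟨s, mem_filter.2 ⟨hs, his⟩⟩

lemma filter_notMem_nonempty (hi : i ∈ activeCoords U A) : (A.filter (i ∉ ·)).Nonempty := by
  obtain ⟨s, hs, his⟩ := (mem_filter.1 hi).2.2
  exact ⟨s, mem_filter.2 ⟨hs, his⟩⟩

lemma mem_iff_of_notMem_activeCoords (hiU : i ∈ U) (hi : i ∉ activeCoords U A)
    {s t : Finset α} (hs : s ∈ A) (ht : t ∈ A) : i ∈ s ↔ i ∈ t := by
  simp only [activeCoords, mem_filter, not_and, not_exists, not_not] at hi
  exact ⟨fun his => hi hiU ⟨s, hs, his⟩ t ht, fun hit => hi hiU ⟨t, ht, hit⟩ s hs⟩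

lemma symmDiff_singleton_notMem_of_notMem_activeCoords (hiU : i ∈ U)
    (hi : i ∉ activeCoords U A) {s : Finset α} (hs : s ∈ A) : s ∆ {i} ∉ A := fun hs' => by
  have := mem_iff_of_notMem_activeCoords hiU hi hs hs'
  rw [mem_symmDiff_singleton_self] at this
  exact iff_not_self this

lemma HasMinDegree.le_card_activeCoords (h : HasMinDegree U g A) (hA : A.Nonempty) :
    g ≤ #(activeCoords U A) := by
  obtain ⟨s, hs⟩ := hA
  refine (h s hs).trans (card_le_card fun a ha => ?_)
  rw [mem_filter] at ha
  exact mem_activeCoords_of_symmDiff_mem ha.1 hs ha.2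

theorem HasMinDegree.two_pow_le_card (h : HasMinDegree U g A) (hA : A.Nonempty) :
    2 ^ g ≤ #A := by
  induction g generalizing U A with
  | zero => simpa using hA.card_pos
  | succ g ih =>
    obtain ⟨s, hs⟩ := hA
    obtain ⟨i, hi⟩ : {a ∈ U | s ∆ {a} ∈ A}.Nonempty :=
      card_pos.1 (by have := h s hs; omega)
    rw [mem_filter] at hi
    have hact := mem_activeCoords_of_symmDiff_mem hi.1 hs hi.2
    have h1 := ih h.filter_mem (filter_mem_nonempty hact)
    have h0 := ih h.filter_notMem (filter_notMem_nonempty hact)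
    rw [← card_filter_add_card_filter_not (p := (i ∈ ·)), pow_succ]
    omega

def closedNbhd (U : Finset α) (A : Finset (Finset α)) : Finset (Finset α) :=
  A ∪ A.biUnion fun s => U.image (s ∆ {·})

lemma mem_closedNbhd {t : Finset α} :
    t ∈ closedNbhd U A ↔ t ∈ A ∨ ∃ s ∈ A, ∃ a ∈ U, s ∆ {a} = t := by
  simp [closedNbhd]

lemma subset_closedNbhd : A ⊆ closedNbhd U A := subset_union_left

lemma closedNbhd_mono {U' : Finset α} {A' : Finset (Finset α)} (hU : U' ⊆ U) (hA : A' ⊆ A) :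
    closedNbhd U' A' ⊆ closedNbhd U A := by
  intro t ht
  rw [mem_closedNbhd] at ht ⊢
  rcases ht with ht | ⟨s, hs, a, ha, hst⟩
  · exact Or.inl (hA ht)
  · exact Or.inr ⟨s, hA hs, a, hU ha, hst⟩

lemma exists_mem_iff_of_mem_closedNbhd_erase {t : Finset α} (ht : t ∈ closedNbhd (U.erase i) A) :
    ∃ s ∈ A, (i ∈ t ↔ i ∈ s) := by
  rcases mem_closedNbhd.1 ht with ht | ⟨s, hs, a, ha, rfl⟩
  · exact ⟨t, ht, Iff.rfl⟩
  · exact ⟨s, hs, mem_symmDiff_singleton_of_ne (ne_of_mem_erase ha).symm s⟩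

lemma card_closedNbhd_filter_add_le :
    #(closedNbhd (U.erase i) (A.filter (i ∈ ·))) +
      #(closedNbhd (U.erase i) (A.filter (i ∉ ·))) ≤ #(closedNbhd U A) := by
  have hdisj : Disjoint (closedNbhd (U.erase i) (A.filter (i ∈ ·)))
      (closedNbhd (U.erase i) (A.filter (i ∉ ·))) := by
    rw [disjoint_left]
    intro t ht1 ht0
    obtain ⟨s, hs, hts⟩ := exists_mem_iff_of_mem_closedNbhd_erase ht1
    obtain ⟨s', hs', hts'⟩ := exists_mem_iff_of_mem_closedNbhd_erase ht0
    exact (mem_filter.1 hs').2 (hts'.1 (hts.2 (mem_filter.1 hs).2))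
  rw [← card_union_of_disjoint hdisj]
  exact card_le_card (union_subset (closedNbhd_mono (erase_subset i U) (filter_subset _ A))
    (closedNbhd_mono (erase_subset i U) (filter_subset _ A)))

/-- Along a coordinate `i` on which `A` is constant, the neighbours `s ∆ {i}` are new. -/
lemma card_closedNbhd_erase_add_le (hiU : i ∈ U) (hi : i ∉ activeCoords U A) :
    #(closedNbhd (U.erase i) A) + #A ≤ #(closedNbhd U A) := by
  have hdisj : Disjoint (closedNbhd (U.erase i) A) (A.image (· ∆ {i})) := by
    rw [disjoint_left]
    intro t ht ht'
    obtain ⟨s, hs, hts⟩ := exists_mem_iff_of_mem_closedNbhd_erase ht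
    obtain ⟨s', hs', rfl⟩ := mem_image.1 ht'
    rw [mem_symmDiff_singleton_self, mem_iff_of_notMem_activeCoords hiU hi hs' hs] at hts
    exact not_iff_self hts
  have himage : A.image (· ∆ {i}) ⊆ closedNbhd U A := fun t ht => by
    obtain ⟨s, hs, rfl⟩ := mem_image.1 ht
    exact mem_closedNbhd.2 (Or.inr ⟨s, hs, i, hiU, rfl⟩)
  rw [← card_image_of_injective A (symmDiff_left_injective {i}), ← card_union_of_disjoint hdisj]
  exact card_le_card (union_subset (closedNbhd_mono (erase_subset i U) subset_rfl) himage)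

theorem HasMinDegree.two_pow_mul_le_card_closedNbhd (h : HasMinDegree U g A) (hA : A.Nonempty) :
    2 ^ g * (#U + 1 - g) ≤ #(closedNbhd U A) := by
  induction U using Finset.strongInduction generalizing g A with
  | H U ih =>
  have hgU := h.le_card hA
  rcases U.eq_empty_or_nonempty with rfl | ⟨i, hiU⟩
  · obtain rfl : g = 0 := by simpa using hgU
    simpa using (hA.mono subset_closedNbhd).card_pos
  have hU : #(U.erase i) + 1 = #U := card_erase_add_one hiU
  by_cases hi : i ∈ activeCoords U A
  · have h1 := ih _ (erase_ssubset hiU) h.filter_mem (filter_mem_nonempty hi)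
    have h0 := ih _ (erase_ssubset hiU) h.filter_notMem (filter_notMem_nonempty hi)
    rw [hU] at h1 h0
    have := two_pow_mul_succ_sub_le g (m := #U) (by omega)
    have := card_closedNbhd_filter_add_le (U := U) (A := A) (i := i)
    omega
  · have h' := h.erase_of_forall_notMem
      fun s hs => symmDiff_singleton_notMem_of_notMem_activeCoords hiU hi hs
    have := ih _ (erase_ssubset hiU) h' hA
    have := h.two_pow_le_card hA
    have := card_closedNbhd_erase_add_le hiU hi
    have hgU' := h'.le_card hA
    have : 2 ^ g * (#U + 1 - g) = 2 ^ g * (#(U.erase i) + 1 - g) + 2 ^ g := by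
      rw [← Nat.mul_succ]; congr 1; omega
    omega

def FarApart (A W : Finset (Finset α)) : Prop :=
  ∀ s ∈ A, ∀ t ∈ W, 1 < #(s ∆ t)

lemma FarApart.symm (h : FarApart A W) : FarApart W A := fun t ht s hs => by
  rw [symmDiff_comm]; exact h s hs t ht

lemma FarApart.mono {A' W' : Finset (Finset α)} (h : FarApart A W) (hA : A' ⊆ A)
    (hW : W' ⊆ W) : FarApart A' W' :=
  fun s hs t ht => h s (hA hs) t (hW ht)

lemma FarApart.image_symmDiff (h : FarApart A W) (i : α) :
    FarApart (A.image (· ∆ {i})) (W.image (· ∆ {i})) := by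
  intro _ hs _ ht
  obtain ⟨s, hsA, rfl⟩ := mem_image.1 hs
  obtain ⟨t, htW, rfl⟩ := mem_image.1 ht
  rw [symmDiff_symmDiff_symmDiff_comm, symmDiff_self, symmDiff_bot]
  exact h s hsA t htW

lemma FarApart.disjoint (h : FarApart A W) : Disjoint A W :=
  disjoint_left.2 fun s hsA hsW => by simpa using h s hsA s hsW

lemma FarApart.symmDiff_singleton_notMem (h : FarApart A W) {s : Finset α} (hs : s ∈ A)
    (a : α) : s ∆ {a} ∉ W := fun hW => by
  simpa [symmDiff_symmDiff_cancel_left] using h s hs _ hW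

lemma two_le_card_of_activeCoords_nonempty (h : (activeCoords U A).Nonempty) : 2 ≤ #A := by
  obtain ⟨i, hi⟩ := h
  obtain ⟨s, hs⟩ := filter_mem_nonempty hi
  obtain ⟨t, ht⟩ := filter_notMem_nonempty hi
  exact one_lt_card.2 ⟨s, (mem_filter.1 hs).1, t, (mem_filter.1 ht).1,
    fun hst => (mem_filter.1 ht).2 (hst ▸ (mem_filter.1 hs).2)⟩

lemma card_le_two_pow_card_activeCoords (hAU : A ⊆ U.powerset) :
    #A ≤ 2 ^ #(activeCoords U A) := by
  have hinj : Set.InjOn (· ∩ activeCoords U A) A := by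
    intro s hs t ht hst
    ext i
    by_cases hi : i ∈ activeCoords U A
    · simpa [hi] using congrArg (i ∈ ·) hst
    by_cases hiU : i ∈ U
    · exact mem_iff_of_notMem_activeCoords hiU hi hs ht
    · exact iff_of_false (fun h => hiU (mem_powerset.1 (hAU hs) h))
        (fun h => hiU (mem_powerset.1 (hAU ht) h))
  rw [← card_image_of_injOn hinj, ← card_powerset]
  exact card_le_card fun t ht => by
    obtain ⟨s, -, rfl⟩ := mem_image.1 ht
    exact mem_powerset.2 inter_subset_right

/-- Flipping a member of `A` at an inactive coordinate leaves `A`, and misses `W`. -/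
lemma card_add_card_add_mul_le (hAU : A ⊆ U.powerset) (hWU : W ⊆ U.powerset)
    (h : FarApart A W) : #A + #W + #A * (#U - #(activeCoords U A)) ≤ 2 ^ #U := by
  set F := (A ×ˢ (U \ activeCoords U A)).image fun p => p.1 ∆ {p.2}
  have hinj : Set.InjOn (fun p : Finset α × α => p.1 ∆ {p.2})
      (A ×ˢ (U \ activeCoords U A) : Finset _) := by
    rintro ⟨s, a⟩ hsa ⟨t, b⟩ htb hst
    simp only [coe_product, Set.mem_prod, mem_coe, mem_sdiff] at hsa htb hst
    obtain rfl : a = b := by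
      by_contra hab
      have := iff_of_eq (congrArg (a ∈ ·) hst)
      simp only [mem_symmDiff_singleton_self, mem_symmDiff_singleton_of_ne hab] at this
      exact not_iff_self (this.trans (mem_iff_of_notMem_activeCoords hsa.2.1 hsa.2.2 htb.1 hsa.1))
    rw [symmDiff_left_inj.1 hst]
  have hFA : Disjoint F A := disjoint_left.2 fun x hx hxA => by
    obtain ⟨⟨s, a⟩, hsa, rfl⟩ := mem_image.1 hx
    simp only [mem_product, mem_sdiff] at hsa
    exact symmDiff_singleton_notMem_of_notMem_activeCoords hsa.2.1 hsa.2.2 hsa.1 hxA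
  have hFW : Disjoint F W := disjoint_left.2 fun x hx hxW => by
    obtain ⟨⟨s, a⟩, hsa, rfl⟩ := mem_image.1 hx
    exact h.symmDiff_singleton_notMem (mem_product.1 hsa).1 a hxW
  have hFU : F ⊆ U.powerset := fun x hx => by
    obtain ⟨⟨s, a⟩, hsa, rfl⟩ := mem_image.1 hx
    simp only [mem_product, mem_sdiff] at hsa
    exact mem_powerset.2 (symmDiff_singleton_subset (mem_powerset.1 (hAU hsa.1)) hsa.2.1)
  have hF : #F = #A * (#U - #(activeCoords U A)) := by
    rw [card_image_of_injOn hinj, card_product, card_sdiff_of_subset activeCoords_subset]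
  rw [← hF, ← card_union_of_disjoint h.disjoint,
    ← card_union_of_disjoint (disjoint_union_left.2 ⟨hFA.symm, hFW.symm⟩), ← card_powerset]
  exact card_le_card (union_subset (union_subset hAU hWU) hFU)

lemma HasMinDegree.card_add_card_add_two_pow_mul_le_of_disjoint (hA : HasMinDegree U g A)
    (hW : HasMinDegree U g W) (hAne : A.Nonempty) (hWne : W.Nonempty)
    (hAU : A ⊆ U.powerset) (hWU : W ⊆ U.powerset) (hAW : FarApart A W)
    (hdisj : Disjoint (activeCoords U A) (activeCoords U W)) :
    #A + #W + 2 ^ g * (#U - g) ≤ 2 ^ #U := by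
  have hd : #(activeCoords U A) + #(activeCoords U W) ≤ #U := by
    rw [← card_union_of_disjoint hdisj]
    exact card_le_card (union_subset activeCoords_subset activeCoords_subset)
  have hfW := card_add_card_add_mul_le hWU hAU hAW.symm
  exact add_add_two_pow_mul_le (hA.le_card_activeCoords hAne) (hW.le_card_activeCoords hWne) hd
    (hA.two_pow_le_card hAne) (hW.two_pow_le_card hWne)
    (fun h => two_le_card_of_activeCoords_nonempty (card_pos.1 h))
    (fun h => two_le_card_of_activeCoords_nonempty (card_pos.1 h))
    (card_le_two_pow_card_activeCoords hAU) (card_le_two_pow_card_activeCoords hWU)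
    (card_add_card_add_mul_le hAU hWU hAW) (by omega)

lemma filter_notMem_subset_powerset_erase (hAU : A ⊆ U.powerset) :
    A.filter (i ∉ ·) ⊆ (U.erase i).powerset := fun s hs => by
  rw [mem_filter] at hs
  exact mem_powerset.2 fun x hx =>
    mem_erase.2 ⟨fun h => hs.2 (h ▸ hx), mem_powerset.1 (hAU hs.1) hx⟩

lemma image_filter_mem_subset_powerset_erase (hAU : A ⊆ U.powerset) :
    (A.filter (i ∈ ·)).image (· ∆ {i}) ⊆ (U.erase i).powerset := fun _ ht => by
  obtain ⟨s, hs, rfl⟩ := mem_image.1 ht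
  rw [mem_filter] at hs
  refine mem_powerset.2 fun x hx => ?_
  have hxi : x ≠ i := by
    rintro rfl
    exact (mem_symmDiff_singleton_self x s).1 hx hs.2
  exact mem_erase.2 ⟨hxi, mem_powerset.1 (hAU hs.1) ((mem_symmDiff_singleton_of_ne hxi s).1 hx)⟩

lemma card_filter_notMem_add_card_image_filter_mem (A : Finset (Finset α)) (i : α) :
    #(A.filter (i ∉ ·)) + #((A.filter (i ∈ ·)).image (· ∆ {i})) = #A := by
  rw [card_image_of_injective _ (symmDiff_left_injective _), add_comm,
    card_filter_add_card_filter_not]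

theorem HasMinDegree.card_add_card_add_two_pow_mul_le (hA : HasMinDegree U g A)
    (hW : HasMinDegree U g W) (hAne : A.Nonempty) (hWne : W.Nonempty)
    (hAU : A ⊆ U.powerset) (hWU : W ⊆ U.powerset) (hAW : FarApart A W) :
    #A + #W + 2 ^ g * (#U - g) ≤ 2 ^ #U := by
  induction U using Finset.strongInduction generalizing g A W with
  | H U ih =>
  by_cases hcom : ∃ i ∈ activeCoords U A, i ∈ activeCoords U W
  · obtain ⟨i, hiA, hiW⟩ := hcom
    have hiU := activeCoords_subset hiA
    have hA0 := filter_notMem_nonempty hiA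
    have hW0 := filter_notMem_nonempty hiW
    have h0 := ih _ (erase_ssubset hiU) hA.filter_notMem hW.filter_notMem hA0 hW0
      (filter_notMem_subset_powerset_erase hAU) (filter_notMem_subset_powerset_erase hWU)
      (hAW.mono (filter_subset _ A) (filter_subset _ W))
    have h1 := ih _ (erase_ssubset hiU) (hA.filter_mem.image_symmDiff i)
      (hW.filter_mem.image_symmDiff i) ((filter_mem_nonempty hiA).image _)
      ((filter_mem_nonempty hiW).image _) (image_filter_mem_subset_powerset_erase hAU)
      (image_filter_mem_subset_powerset_erase hWU)
      ((hAW.mono (filter_subset _ A) (filter_subset _ W)).image_symmDiff i)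
    have := card_filter_notMem_add_card_image_filter_mem A i
    have := card_filter_notMem_add_card_image_filter_mem W i
    have hm : 1 ≤ #(U.erase i) := by
      by_contra hm
      rw [Nat.lt_one_iff.1 (not_le.1 hm), pow_zero] at h0
      have := hA0.card_pos
      have := hW0.card_pos
      omega
    have := two_pow_mul_succ_sub_le g hm
    rw [← card_erase_add_one hiU, pow_succ]
    omega
  · exact hA.card_add_card_add_two_pow_mul_le_of_disjoint hW hAne hWne hAU hWU hAW
      (disjoint_left.2 fun i hiA hiW => hcom ⟨i, hiA, hiW⟩)

end Hypercube

namespace SimpleGraph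

variable {V : Type*} {G : SimpleGraph V} {S X : Set V}

/-- `X \ S` is a union of components of `G - S`. -/
def IsClosedOutside (G : SimpleGraph V) (S X : Set V) : Prop :=
  ∀ ⦃z w⦄, z ∈ X → G.Adj z w → w ∉ S → w ∈ X

lemma IsClosedOutside.compl (hX : IsClosedOutside G S X) : IsClosedOutside G S (X ∪ S)ᶜ := by
  intro z w hz hzw hwS hw
  rcases hw with hwX | hwS'
  · exact hz (Or.inl (hX hwX hzw.symm fun hzS => hz (Or.inr hzS)))
  · exact hwS hwS'

lemma IsClosedOutside.not_adj (hX : IsClosedOutside G S X) {z w : V} (hz : z ∈ X)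
    (hw : w ∈ (X ∪ S)ᶜ) : ¬ G.Adj z w := fun hzw =>
  hw (Or.inl (hX hz hzw fun hwS => hw (Or.inr hwS)))

lemma not_connected_induce_compl_of_isClosedOutside (hX : IsClosedOutside G S X) {u v : V}
    (hu : u ∈ X) (huS : u ∉ S) (hv : v ∉ X) (hvS : v ∉ S) :
    ¬ (G.induce Sᶜ).Connected := by
  intro hconn
  have hreach := (reachable_iff_reflTransGen _ _).1 (hconn.preconnected ⟨u, huS⟩ ⟨v, hvS⟩)
  suffices ∀ w : (Sᶜ : Set V),
      Relation.ReflTransGen (G.induce Sᶜ).Adj ⟨u, huS⟩ w → ↑w ∈ X from hv (this _ hreach)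
  intro w hw
  induction hw with
  | refl => exact hu
  | @tail _ c _ hadj ih => exact hX ih hadj c.2

lemma exists_isClosedOutside_of_not_connected (h : ¬ (G.induce Sᶜ).Connected) :
    S = Set.univ ∨
      ∃ X, IsClosedOutside G S X ∧ Disjoint X S ∧ X.Nonempty ∧ (X ∪ S)ᶜ.Nonempty := by
  refine or_iff_not_imp_left.2 fun hS => ?_
  obtain ⟨u, hu⟩ := (Set.ne_univ_iff_exists_notMem S).1 hS
  let X : Set V := {z | ∃ hz : z ∉ S, (G.induce Sᶜ).Reachable ⟨u, hu⟩ ⟨z, hz⟩}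
  have hX : IsClosedOutside G S X := fun z w ⟨_, hr⟩ hzw hw =>
    ⟨hw, hr.trans (Adj.reachable (G := G.induce Sᶜ) hzw)⟩
  refine ⟨X, hX, Set.disjoint_left.2 fun z hz => hz.1, ⟨u, hu, Reachable.refl _⟩, ?_⟩
  by_contra hW
  have : Nonempty (Sᶜ : Set V) := ⟨⟨u, hu⟩⟩
  have hreach (z : (Sᶜ : Set V)) : (G.induce Sᶜ).Reachable ⟨u, hu⟩ z := by
    by_contra hr
    exact hW ⟨z, fun hz => hz.elim (fun ⟨_, hz⟩ => hr hz) z.2⟩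
  exact h ⟨fun x y => (hreach x).symm.trans (hreach y)⟩

end SimpleGraph

namespace HCN

open Hypercube
open SimpleGraph (IsClosedOutside)

variable {n : ℕ}

def flipBit (a : Fin n) (y : Fin n → Bool) : Fin n → Bool := Function.update y a (!y a)

/-- Identifies a cluster with the cube on `Finset.univ : Finset (Fin n)`. -/
def ones (y : Fin n → Bool) : Finset (Fin n) := {i | y i = true}

def partner (v : HVert n) : HVert n :=
  if v.1 = v.2 then (fun i => !v.1 i, fun i => !v.2 i) else (v.2, v.1)

lemma ones_injective : Function.Injective (ones (n := n)) := fun y z h => by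
  funext i
  have := congrArg (i ∈ ·) h
  simp only [ones, mem_filter, mem_univ, true_and, eq_iff_iff] at this
  cases hy : y i <;> cases hz : z i <;> simp_all

lemma ones_flipBit (a : Fin n) (y : Fin n → Bool) : ones (flipBit a y) = ones y ∆ {a} := by
  ext i
  by_cases hia : i = a
  · subst hia
    cases hy : y i <;> simp [ones, flipBit, mem_symmDiff, hy]
  · rw [mem_symmDiff, ones, ones, mem_filter, mem_filter, flipBit, Function.update_of_ne hia]
    simp [hia]

lemma flipBit_ne (a : Fin n) (y : Fin n → Bool) : flipBit a y ≠ y := fun h =>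
  symmDiff_singleton_ne (ones y) a (by rw [← ones_flipBit, h])

lemma flipBit_injective (y : Fin n → Bool) : Function.Injective (flipBit · y) := fun a b h => by
  simpa only [ones_flipBit, symmDiff_right_inj, singleton_inj] using congrArg ones h

@[simp] lemma ones_bot : ones (⊥ : Fin n → Bool) = ∅ := by ext; simp [ones]

@[simp] lemma ones_top : ones (⊤ : Fin n → Bool) = univ := by ext; simp [ones]

lemma top_ne_bot (hn : 1 ≤ n) : (⊤ : Fin n → Bool) ≠ ⊥ := fun h => by
  simpa using congrFun h ⟨0, hn⟩

lemma flipBit_flipBit (a : Fin n) (y : Fin n → Bool) : flipBit a (flipBit a y) = y :=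
  ones_injective (by rw [ones_flipBit, ones_flipBit, symmDiff_symmDiff_cancel_right])

lemma flipBit_comm (a b : Fin n) (y : Fin n → Bool) :
    flipBit a (flipBit b y) = flipBit b (flipBit a y) :=
  ones_injective (by simp only [ones_flipBit, symmDiff_right_comm])

lemma eq_flipBit_iff {a : Fin n} {y y' : Fin n → Bool} :
    y' = flipBit a y ↔ ones y ∆ ones y' = {a} := by
  rw [← ones_injective.eq_iff, ones_flipBit]
  constructor <;> intro h
  · rw [h, symmDiff_symmDiff_cancel_left]
  · rw [← h, symmDiff_symmDiff_cancel_left]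

lemma eq_or_exists_eq_flipBit {y y' : Fin n → Bool} (h : #(ones y ∆ ones y') ≤ 1) :
    y' = y ∨ ∃ a, y' = flipBit a y := by
  rcases Nat.le_one_iff_eq_zero_or_eq_one.1 h with h | h
  · exact Or.inl (ones_injective (symmDiff_eq_empty.1 (card_eq_zero.1 h))).symm
  · obtain ⟨a, ha⟩ := card_eq_one.1 h
    exact Or.inr ⟨a, eq_flipBit_iff.2 ha⟩

lemma partner_partner (v : HVert n) : partner (partner v) = v := by
  obtain ⟨x, y⟩ := v
  by_cases h : x = y
  · subst h; simp [partner]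
  · simp [partner, h, Ne.symm h]

lemma not_apply_ne_self (hn : 1 ≤ n) (x : Fin n → Bool) : (fun i => !x i) ≠ x := fun h => by
  simpa using congrFun h ⟨0, hn⟩

lemma partner_fst_ne (hn : 1 ≤ n) (v : HVert n) : (partner v).1 ≠ v.1 := by
  unfold partner
  split_ifs with h
  · exact not_apply_ne_self hn v.1
  · exact Ne.symm h

lemma card_filter_ne_eq_one_iff {y y' : Fin n → Bool} :
    #{i | y i ≠ y' i} = 1 ↔ ∃ a, y' = flipBit a y := by
  have : ({i | y i ≠ y' i} : Finset (Fin n)) = ones y ∆ ones y' := by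
    ext i
    cases hy : y i <;> cases hy' : y' i <;> simp [ones, mem_symmDiff, hy, hy']
  simp only [this, eq_flipBit_iff, card_eq_one]

lemma adj_iff (hn : 1 ≤ n) {u v : HVert n} :
    (HCN n).Adj u v ↔ (v.1 = u.1 ∧ ∃ a, v.2 = flipBit a u.2) ∨ v = partner u := by
  have hrel : ∀ u v : HVert n, ((u.1 = v.1 ∧ #{i | u.2 i ≠ v.2 i} = 1) ∨
      (u.1 ≠ u.2 ∧ v = (u.2, u.1)) ∨
      (u.1 = u.2 ∧ v = (fun i => !u.1 i, fun i => !u.2 i))) ↔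
      (v.1 = u.1 ∧ ∃ a, v.2 = flipBit a u.2) ∨ v = partner u := by
    intro u v
    rw [card_filter_ne_eq_one_iff, eq_comm (a := u.1)]
    by_cases h : u.1 = u.2 <;> simp [partner, h]
  have hsymm : ∀ u v : HVert n, ((v.1 = u.1 ∧ ∃ a, v.2 = flipBit a u.2) ∨ v = partner u) →
      (u.1 = v.1 ∧ ∃ a, u.2 = flipBit a v.2) ∨ u = partner v := by
    rintro u v (⟨h1, a, h2⟩ | rfl)
    · refine Or.inl ⟨h1.symm, a, ?_⟩
      rw [eq_flipBit_iff, symmDiff_comm, ← eq_flipBit_iff, h2]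
    · exact Or.inr (partner_partner u).symm
  rw [HCN, SimpleGraph.fromRel_adj, hrel, hrel]
  refine ⟨fun h => h.2.elim id (hsymm v u), fun h => ⟨?_, Or.inl h⟩⟩
  rintro rfl
  rcases h with ⟨-, a, ha⟩ | h
  · exact flipBit_ne a u.2 ha.symm
  · exact partner_fst_ne hn u (congrArg Prod.fst h).symm

lemma adj_partner (hn : 1 ≤ n) (u : HVert n) : (HCN n).Adj u (partner u) :=
  (adj_iff hn).2 (Or.inr rfl)

lemma adj_flipBit (hn : 1 ≤ n) (u : HVert n) (a : Fin n) : (HCN n).Adj u (u.1, flipBit a u.2) :=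
  (adj_iff hn).2 (Or.inl ⟨rfl, a, rfl⟩)

lemma eq_partner_or_exists_eq_flipBit_of_adj (hn : 1 ≤ n) {u w : HVert n} (h : (HCN n).Adj u w) :
    w = partner u ∨ ∃ a, w = (u.1, flipBit a u.2) := by
  rcases (adj_iff hn).1 h with ⟨h1, a, h2⟩ | h
  · exact Or.inr ⟨a, Prod.ext h1 h2⟩
  · exact Or.inl h

section Construction

variable (D : Finset (Fin n))

def subcube : Finset (HVert n) := {v | v.1 = ⊥ ∧ ones v.2 ⊆ D}

/-- The neighbourhood of `subcube D`. -/
def cutSet : Finset (HVert n) :=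
  (subcube D ×ˢ Dᶜ).image (fun p => (p.1.1, flipBit p.2 p.1.2)) ∪ (subcube D).image partner

variable {D}

lemma mem_subcube {v : HVert n} : v ∈ subcube D ↔ v.1 = ⊥ ∧ ones v.2 ⊆ D := by
  simp [subcube]

lemma mem_cutSet {v : HVert n} : v ∈ cutSet D ↔
    (∃ q ∈ subcube D, ∃ a ∉ D, (q.1, flipBit a q.2) = v) ∨
      ∃ q ∈ subcube D, partner q = v := by
  simp [cutSet, and_assoc]

lemma card_subcube : #(subcube D) = 2 ^ #D := by
  rw [← card_powerset]
  refine card_nbij' (fun v => ones v.2) (fun s => (⊥, fun i => decide (i ∈ s))) ?_ ?_ ?_ ?_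
  · intro v hv
    simpa [mem_subcube] using (mem_subcube.1 hv).2
  · intro s hs
    simp only [coe_powerset, Set.mem_preimage, Set.mem_powerset_iff, coe_subset] at hs
    simp [mem_subcube, ones, hs]
  · intro v hv
    obtain ⟨h1, -⟩ := mem_subcube.1 hv
    refine Prod.ext h1.symm (funext fun i => ?_)
    cases h : v.2 i <;> simp [ones, h]
  · intro s _
    ext i
    simp [ones]

lemma ones_flipBit_sdiff {y : Fin n → Bool} (hy : ones y ⊆ D) {a : Fin n} (ha : a ∉ D) :
    ones (flipBit a y) \ D = {a} := by
  ext x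
  by_cases hxa : x = a
  · subst hxa; simpa [ones_flipBit, mem_symmDiff, ha] using fun h => ha (hy h)
  · simp only [mem_sdiff, ones_flipBit, mem_symmDiff_singleton_of_ne hxa, mem_singleton, hxa,
      iff_false, not_and, not_not]
    exact fun h => hy h

lemma card_cutSet (hn : 1 ≤ n) : #(cutSet D) = 2 ^ #D * (n + 1 - #D) := by
  have hinj : Set.InjOn (fun p : HVert n × Fin n => (p.1.1, flipBit p.2 p.1.2))
      (subcube D ×ˢ Dᶜ : Finset _) := by
    rintro ⟨q, a⟩ hqa ⟨q', b⟩ hqb h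
    simp only [coe_product, Set.mem_prod, mem_coe, mem_compl, Prod.mk.injEq] at hqa hqb h
    obtain rfl : a = b := by
      have := congrArg (fun y => ones y \ D) h.2
      simp only [ones_flipBit_sdiff (mem_subcube.1 hqa.1).2 hqa.2,
        ones_flipBit_sdiff (mem_subcube.1 hqb.1).2 hqb.2, singleton_inj] at this
      exact this
    have := congrArg (flipBit a) h.2
    rw [flipBit_flipBit, flipBit_flipBit] at this
    rw [Prod.ext h.1 this]
  have hdisj : Disjoint ((subcube D ×ˢ Dᶜ).image (fun p => (p.1.1, flipBit p.2 p.1.2)))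
      ((subcube D).image partner) := by
    rw [disjoint_left]
    rintro _ h1 h2
    obtain ⟨⟨q, a⟩, hqa, rfl⟩ := mem_image.1 h1
    obtain ⟨q', hq', h⟩ := mem_image.1 h2
    have := partner_fst_ne hn q'
    rw [h, (mem_subcube.1 hq').1, (mem_subcube.1 (mem_product.1 hqa).1).1] at this
    exact this rfl
  have hD : #D ≤ n := (card_le_univ D).trans_eq (Fintype.card_fin n)
  rw [cutSet, card_union_of_disjoint hdisj, card_image_of_injOn hinj,
    card_image_of_injective _ (Function.LeftInverse.injective partner_partner), card_product,
    card_compl, Fintype.card_fin, card_subcube, show n + 1 - #D = n - #D + 1 by omega, mul_add_one]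

lemma bot_bot_mem_subcube : ((⊥, ⊥) : HVert n) ∈ subcube D := by simp [mem_subcube]

lemma fst_ne_bot_of_mem_image_partner (hn : 1 ≤ n) {v : HVert n}
    (hv : ∃ q ∈ subcube D, partner q = v) : v.1 ≠ ⊥ := by
  obtain ⟨q, hq, rfl⟩ := hv
  rw [← (mem_subcube.1 hq).1]
  exact partner_fst_ne hn q

lemma isClosedOutside_subcube (hn : 1 ≤ n) :
    IsClosedOutside (HCN n) (cutSet D) (subcube D : Set (HVert n)) := by
  intro z w hz hzw hw
  rw [mem_coe] at hz ⊢
  rcases eq_partner_or_exists_eq_flipBit_of_adj hn hzw with rfl | ⟨a, rfl⟩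
  · exact absurd (mem_cutSet.2 (Or.inr ⟨z, hz, rfl⟩)) hw
  by_cases ha : a ∈ D
  · refine mem_subcube.2 ⟨(mem_subcube.1 hz).1, ?_⟩
    rw [ones_flipBit]
    exact symmDiff_singleton_subset (mem_subcube.1 hz).2 ha
  · exact absurd (mem_cutSet.2 (Or.inl ⟨z, hz, a, ha, rfl⟩)) hw

lemma bot_bot_notMem_cutSet (hn : 1 ≤ n) : ((⊥, ⊥) : HVert n) ∉ cutSet D := by
  intro h
  rcases mem_cutSet.1 h with ⟨q, hq, a, ha, h⟩ | h
  · have := congrArg (fun y => ones y \ D) (congrArg Prod.snd h)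
    simp [ones_flipBit_sdiff (mem_subcube.1 hq).2 ha] at this
  · exact fst_ne_bot_of_mem_image_partner hn h rfl

lemma top_bot_notMem_cutSet (hn : 1 ≤ n) (hD : #D < n) : ((⊤, ⊥) : HVert n) ∉ cutSet D := by
  intro h
  rcases mem_cutSet.1 h with ⟨q, hq, a, ha, h⟩ | ⟨q, hq, h⟩
  · exact top_ne_bot hn ((congrArg Prod.fst h).symm.trans (mem_subcube.1 hq).1)
  · have hq' : q = (⊥, ⊤) := by
      rw [← partner_partner q, h, partner, if_neg (top_ne_bot hn)]
    have := card_le_card (mem_subcube.1 (hq' ▸ hq)).2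
    simp only [ones_top, card_univ, Fintype.card_fin] at this
    omega

lemma flipBit_notMem_cutSet (hn : 1 ≤ n) {v : HVert n} (hv : v ∉ cutSet D) (hv1 : v.1 = ⊥)
    {a : Fin n} (ha : a ∈ D) : (v.1, flipBit a v.2) ∉ cutSet D := by
  intro h
  rcases mem_cutSet.1 h with ⟨q, hq, b, hb, h⟩ | h
  · refine hv <| mem_cutSet.2 (Or.inl ⟨(q.1, flipBit a q.2), ?_, b, hb, ?_⟩)
    · rw [mem_subcube, ones_flipBit]
      exact ⟨(mem_subcube.1 hq).1, symmDiff_singleton_subset (mem_subcube.1 hq).2 ha⟩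
    · rw [Prod.mk.injEq] at h
      rw [flipBit_comm, h.2, flipBit_flipBit, h.1]
  · exact fst_ne_bot_of_mem_image_partner hn h hv1

/-- A cluster other than `⊥` meets `cutSet D` only in partners of `subcube D`, and these lie
on a single vertex: `(x, ⊥)` for `x ≠ ⊤`, or `(⊤, ⊤)`. -/
lemma exists_forall_flipBit_mem_cutSet_eq (hD : #D < n) {v : HVert n} (hv1 : v.1 ≠ ⊥) :
    ∃ c, ∀ a, (v.1, flipBit a v.2) ∈ cutSet D → flipBit a v.2 = c := by
  refine ⟨if v.1 = ⊤ then ⊤ else ⊥, fun a ha => ?_⟩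
  rcases mem_cutSet.1 ha with ⟨q, hq, b, hb, h⟩ | ⟨q, hq, h⟩
  · exact absurd ((congrArg Prod.fst h).symm.trans (mem_subcube.1 hq).1) hv1
  have hq' := partner_partner q
  rw [h] at hq'
  have hq1 := (mem_subcube.1 hq).1
  have hq2 := (mem_subcube.1 hq).2
  rw [← hq'] at hq1 hq2
  unfold partner at hq1 hq2
  split_ifs at hq1 hq2 with hy <;> simp only at hy hq1 hq2
  · have htop : v.1 = ⊤ := funext fun i => by simpa using congrFun hq1 i
    rw [if_pos htop, ← hy, htop]
  · have htop : v.1 ≠ ⊤ := by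
      rintro htop
      rw [htop, ones_top] at hq2
      have := card_le_card hq2
      simp only [card_univ, Fintype.card_fin] at this
      omega
    rw [if_neg htop]
    exact hq1

lemma le_ncard_neighborSet_sdiff (hn : 1 ≤ n) {S : Set (HVert n)} (v : HVert n)
    (F : Finset (Fin n)) (hF : ∀ a ∈ F, (v.1, flipBit a v.2) ∉ S) :
    #F ≤ ((HCN n).neighborSet v \ S).ncard := by
  rw [← card_image_of_injective F (f := fun a => (v.1, flipBit a v.2))
    fun a b h => flipBit_injective v.2 (Prod.ext_iff.1 h).2, ← Set.ncard_coe_finset]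
  refine Set.ncard_le_ncard (fun w hw => ?_) (Set.toFinite _)
  obtain ⟨a, ha, rfl⟩ := mem_image.1 hw
  exact ⟨adj_flipBit hn v a, hF a ha⟩

theorem isRgCut_cutSet (hn : 1 ≤ n) (hD : #D ≤ n - 1) : IsRgCut n #D (cutSet D) := by
  refine ⟨SimpleGraph.not_connected_induce_compl_of_isClosedOutside (isClosedOutside_subcube hn)
    bot_bot_mem_subcube (bot_bot_notMem_cutSet hn) (fun h => top_ne_bot hn (mem_subcube.1 h).1)
    (top_bot_notMem_cutSet hn (by omega)), fun v hv => ?_⟩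
  by_cases hv1 : v.1 = ⊥
  · exact le_ncard_neighborSet_sdiff hn v D fun a ha => flipBit_notMem_cutSet hn hv hv1 ha
  · obtain ⟨c, hc⟩ := exists_forall_flipBit_mem_cutSet_eq (D := D) (by omega) hv1
    have hle : #{a | flipBit a v.2 = c} ≤ 1 :=
      card_le_one.2 fun a ha b hb =>
        flipBit_injective v.2 ((mem_filter.1 ha).2.trans (mem_filter.1 hb).2.symm)
    have := le_ncard_neighborSet_sdiff hn (S := cutSet D) v {a | ¬flipBit a v.2 = c}
      fun a ha h => (mem_filter.1 ha).2 (hc a h)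
    have := card_filter_add_card_filter_not (s := univ) (p := fun a => flipBit a v.2 = c)
    rw [card_univ, Fintype.card_fin] at this
    omega

end Construction

section LowerBound

open scoped Classical

variable {g : ℕ} {S X B : Set (HVert n)}

noncomputable def fiber (X : Set (HVert n)) (x : Fin n → Bool) : Finset (Fin n → Bool) :=
  {y | (x, y) ∈ X}

noncomputable def cubeFiber (X : Set (HVert n)) (x : Fin n → Bool) : Finset (Finset (Fin n)) :=
  (fiber X x).image ones

noncomputable def clusters (X : Set (HVert n)) : Finset (Fin n → Bool) :=
  {x | ∃ y, (x, y) ∈ X}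

lemma mem_fiber {x y : Fin n → Bool} : y ∈ fiber X x ↔ (x, y) ∈ X := by simp [fiber]

lemma mem_cubeFiber {x : Fin n → Bool} {s : Finset (Fin n)} :
    s ∈ cubeFiber X x ↔ ∃ y, (x, y) ∈ X ∧ ones y = s := by
  simp [cubeFiber, fiber]

lemma ones_mem_cubeFiber {x y : Fin n → Bool} (h : (x, y) ∈ X) : ones y ∈ cubeFiber X x :=
  mem_cubeFiber.2 ⟨y, h, rfl⟩

lemma card_cubeFiber (X : Set (HVert n)) (x : Fin n → Bool) :
    #(cubeFiber X x) = #(fiber X x) :=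
  card_image_of_injective _ ones_injective

lemma mem_clusters {x : Fin n → Bool} : x ∈ clusters X ↔ ∃ y, (x, y) ∈ X := by
  simp [clusters]

lemma ncard_eq_sum_card_fiber (X : Set (HVert n)) : X.ncard = ∑ x, #(fiber X x) := by
  rw [Set.ncard_eq_toFinset_card', card_eq_sum_card_fiberwise (f := Prod.fst) (t := univ)
    fun _ _ => mem_univ _]
  refine sum_congr rfl fun x _ => card_nbij' Prod.snd (fun y => (x, y)) ?_ ?_ ?_ ?_
  · intro v hv
    simp only [coe_filter, Set.mem_ofPred_eq, Set.mem_toFinset] at hv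
    simpa [mem_fiber, ← hv.2] using hv.1
  · intro y hy
    simpa [mem_fiber] using hy
  · intro v hv
    simp only [coe_filter, Set.mem_ofPred_eq] at hv
    exact Prod.ext hv.2.symm rfl
  · intro y _
    rfl

lemma card_fiber_add_card_fiber_add_card_fiber (hBS : Disjoint B S) (x : Fin n → Bool) :
    #(fiber B x) + #(fiber (B ∪ S)ᶜ x) + #(fiber S x) = 2 ^ n := by
  have hd1 : Disjoint (fiber B x) (fiber (B ∪ S)ᶜ x) :=
    disjoint_left.2 fun y hB hW => (mem_fiber.1 hW) (Or.inl (mem_fiber.1 hB))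
  have hd2 : Disjoint (fiber B x ∪ fiber (B ∪ S)ᶜ x) (fiber S x) := by
    refine disjoint_left.2 fun y hy hS => ?_
    rcases mem_union.1 hy with hB | hW
    · exact Set.disjoint_left.1 hBS (mem_fiber.1 hB) (mem_fiber.1 hS)
    · exact (mem_fiber.1 hW) (Or.inr (mem_fiber.1 hS))
  have hcover : fiber B x ∪ fiber (B ∪ S)ᶜ x ∪ fiber S x = univ := by
    ext y
    simp only [mem_union, mem_fiber, Set.mem_compl_iff, Set.mem_union, mem_univ, iff_true]
    tauto
  rw [← card_union_of_disjoint hd1, ← card_union_of_disjoint hd2, hcover, card_univ,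
    Fintype.card_fun, Fintype.card_bool, Fintype.card_fin]

lemma ncard_neighborSet_sdiff_le (hn : 1 ≤ n) (x y : Fin n → Bool) :
    ((HCN n).neighborSet (x, y) \ S).ncard ≤
      #{a | (x, flipBit a y) ∉ S} + ({partner (x, y)} \ S).ncard := by
  have hsub : (HCN n).neighborSet (x, y) \ S ⊆
      ↑(({a | (x, flipBit a y) ∉ S} : Finset (Fin n)).image fun a => (x, flipBit a y)) ∪
        ({partner (x, y)} \ S) := by
    rintro w ⟨hzw, hw⟩
    rcases eq_partner_or_exists_eq_flipBit_of_adj hn hzw with rfl | ⟨a, rfl⟩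
    · exact Or.inr ⟨rfl, hw⟩
    · exact Or.inl (mem_image.2 ⟨a, mem_filter.2 ⟨mem_univ a, hw⟩, rfl⟩)
  calc _ ≤ _ := Set.ncard_le_ncard hsub (Set.toFinite _)
    _ ≤ _ := Set.ncard_union_le _ _
    _ ≤ _ := by rw [Set.ncard_coe_finset]; gcongr; exact card_image_le

lemma card_filter_flipBit_notMem_le (hX : IsClosedOutside (HCN n) S X) (hn : 1 ≤ n)
    {x y : Fin n → Bool} (hy : (x, y) ∈ X) :
    #{a | (x, flipBit a y) ∉ S} ≤ #{a ∈ univ | ones y ∆ {a} ∈ cubeFiber X x} := by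
  refine card_le_card fun a ha => mem_filter.2 ⟨mem_univ a, ?_⟩
  rw [← ones_flipBit]
  exact ones_mem_cubeFiber (hX hy (adj_flipBit hn (x, y) a) (mem_filter.1 ha).2)

lemma hasMinDegree_cubeFiber (hn : 1 ≤ n) (hX : IsClosedOutside (HCN n) S X)
    (hXS : Disjoint X S) (hdeg : ∀ v ∉ S, g ≤ ((HCN n).neighborSet v \ S).ncard)
    (x : Fin n → Bool) : HasMinDegree univ (g - 1) (cubeFiber X x) := by
  intro s hs
  obtain ⟨y, hy, rfl⟩ := mem_cubeFiber.1 hs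
  have h1 := hdeg _ (Set.disjoint_left.1 hXS hy)
  have h2 := ncard_neighborSet_sdiff_le (S := S) hn x y
  have h3 : ({partner (x, y)} \ S).ncard ≤ 1 :=
    (Set.ncard_le_ncard Set.sdiff_subset (Set.toFinite _)).trans (Set.ncard_singleton _).le
  have := card_filter_flipBit_notMem_le hX hn hy
  omega

lemma hasMinDegree_cubeFiber_of_partner_mem (hn : 1 ≤ n) (hX : IsClosedOutside (HCN n) S X)
    (hXS : Disjoint X S) (hdeg : ∀ v ∉ S, g ≤ ((HCN n).neighborSet v \ S).ncard)
    {x : Fin n → Bool} (hp : ∀ y, (x, y) ∈ X → partner (x, y) ∈ S) :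
    HasMinDegree univ g (cubeFiber X x) := by
  intro s hs
  obtain ⟨y, hy, rfl⟩ := mem_cubeFiber.1 hs
  have h1 := hdeg _ (Set.disjoint_left.1 hXS hy)
  have h2 := ncard_neighborSet_sdiff_le (S := S) hn x y
  rw [Set.sdiff_eq_empty.2 (Set.singleton_subset_iff.2 (hp y hy)), Set.ncard_empty, add_zero] at h2
  have := card_filter_flipBit_notMem_le hX hn hy
  omega

lemma farApart_cubeFiber (hn : 1 ≤ n) (hB : IsClosedOutside (HCN n) S B) (x : Fin n → Bool) :
    FarApart (cubeFiber B x) (cubeFiber (B ∪ S)ᶜ x) := by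
  intro _ hs _ ht
  obtain ⟨y, hy, rfl⟩ := mem_cubeFiber.1 hs
  obtain ⟨y', hy', rfl⟩ := mem_cubeFiber.1 ht
  by_contra! h
  rcases eq_or_exists_eq_flipBit h with rfl | ⟨a, rfl⟩
  · exact hy' (Or.inl hy)
  · exact hB.not_adj hy hy' (adj_flipBit hn (x, y) a)

lemma closedNbhd_cubeFiber_subset (hn : 1 ≤ n) (hX : IsClosedOutside (HCN n) S X)
    (x : Fin n → Bool) : closedNbhd univ (cubeFiber X x) ⊆ cubeFiber X x ∪ cubeFiber S x := by
  intro t ht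
  rcases mem_closedNbhd.1 ht with ht | ⟨_, hs, a, -, rfl⟩
  · exact mem_union_left _ ht
  obtain ⟨y, hy, rfl⟩ := mem_cubeFiber.1 hs
  rw [← ones_flipBit]
  by_cases hS : (x, flipBit a y) ∈ S
  · exact mem_union_right _ (ones_mem_cubeFiber hS)
  · exact mem_union_left _ (ones_mem_cubeFiber (hX hy (adj_flipBit hn (x, y) a) hS))

lemma card_fiber_add_card_fiber_le_ncard (hn : 1 ≤ n) {x : Fin n → Bool}
    (hp : ∀ y, (x, y) ∈ X → partner (x, y) ∈ S) :
    #(fiber S x) + #(fiber X x) ≤ S.ncard := by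
  have hdisj :
      Disjoint ((fiber S x).image (x, ·)) ((fiber X x).image fun y => partner (x, y)) := by
    refine disjoint_left.2 fun v hv hv' => ?_
    obtain ⟨y, -, rfl⟩ := mem_image.1 hv
    obtain ⟨y', -, h⟩ := mem_image.1 hv'
    have := congrArg Prod.fst h
    exact partner_fst_ne hn (x, y') this
  have hsub : (fiber S x).image (x, ·) ∪ (fiber X x).image (fun y => partner (x, y)) ⊆
      S.toFinset := by
    refine union_subset (fun v hv => ?_) (fun v hv => ?_) <;>
      obtain ⟨y, hy, rfl⟩ := mem_image.1 hv
    · exact Set.mem_toFinset.2 (mem_fiber.1 hy)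
    · exact Set.mem_toFinset.2 (hp y (mem_fiber.1 hy))
  rw [Set.ncard_eq_toFinset_card', ← card_image_of_injective _ (Prod.mk_right_injective x),
    ← card_image_of_injective (fiber X x) (f := fun y => partner (x, y))
      fun y y' h => by simpa [partner_partner] using congrArg partner h,
    ← card_union_of_disjoint hdisj]
  exact card_le_card hsub

/-- If a union `X` of components of `HCN n - S` lies in one cluster, the crossing edges at `X`
go into `S`, and `S` contains the outer boundary of `X` in its cluster. -/
theorem le_ncard_of_forall_fst_eq (hn : 1 ≤ n) (hX : IsClosedOutside (HCN n) S X)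
    (hXS : Disjoint X S) (hdeg : ∀ v ∉ S, g ≤ ((HCN n).neighborSet v \ S).ncard)
    (hXne : X.Nonempty) {x : Fin n → Bool} (hx : ∀ z ∈ X, z.1 = x) :
    2 ^ g * (n + 1 - g) ≤ S.ncard := by
  have hp : ∀ y, (x, y) ∈ X → partner (x, y) ∈ S := fun y hy => by
    by_contra hS
    exact partner_fst_ne hn (x, y) (hx _ (hX hy (adj_partner hn _) hS))
  obtain ⟨⟨x', y⟩, hy⟩ := hXne
  obtain rfl : x' = x := hx _ hy
  have h3 := (hasMinDegree_cubeFiber_of_partner_mem hn hX hXS hdeg hp)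
    |>.two_pow_mul_le_card_closedNbhd ⟨_, ones_mem_cubeFiber hy⟩
  have h4 := (card_le_card (closedNbhd_cubeFiber_subset hn hX x')).trans (card_union_le _ _)
  have := card_fiber_add_card_fiber_le_ncard hn hp
  rw [card_univ, Fintype.card_fin] at h3
  rw [card_cubeFiber, card_cubeFiber] at h4
  omega

theorem card_fiber_le_of_mem_clusters (hn : 1 ≤ n) (hB : IsClosedOutside (HCN n) S B)
    (hBS : Disjoint B S) (hdeg : ∀ v ∉ S, g ≤ ((HCN n).neighborSet v \ S).ncard)
    {x : Fin n → Bool} (hxB : x ∈ clusters B) (hxW : x ∈ clusters (B ∪ S)ᶜ) :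
    2 ^ (g - 1) * (n - (g - 1)) ≤ #(fiber S x) := by
  obtain ⟨y, hy⟩ := mem_clusters.1 hxB
  obtain ⟨y', hy'⟩ := mem_clusters.1 hxW
  have := (hasMinDegree_cubeFiber hn hB hBS hdeg x).card_add_card_add_two_pow_mul_le
    (hasMinDegree_cubeFiber hn hB.compl (Set.disjoint_left.2 fun _ h h' => h (Or.inr h')) hdeg x)
    ⟨_, ones_mem_cubeFiber hy⟩ ⟨_, ones_mem_cubeFiber hy'⟩
    (fun _ _ => mem_powerset.2 (subset_univ _)) (fun _ _ => mem_powerset.2 (subset_univ _))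
    (farApart_cubeFiber hn hB x)
  have := card_fiber_add_card_fiber_add_card_fiber hBS x
  rw [card_cubeFiber, card_cubeFiber, card_univ, Fintype.card_fin] at *
  omega

/-- A pair of a cluster `y` missed by `W = (B ∪ S)ᶜ` and a cluster `z` missed by `B` gives a
vertex of `S`: `(y, z)` itself, or else `(y, z) ∈ B` and its partner `(z, y)` is in `S`. -/
lemma card_mul_card_le_sum_card_fiber (hn : 1 ≤ n) (hB : IsClosedOutside (HCN n) S B)
    {PB PW : Finset (Fin n → Bool)} (hPB : ∀ y ∈ PB, y ∉ clusters (B ∪ S)ᶜ)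
    (hPW : ∀ z ∈ PW, z ∉ clusters B) (hdisj : Disjoint PB PW) :
    #PB * #PW ≤ ∑ x ∈ PB ∪ PW, #(fiber S x) := by
  have hswap : ∀ y ∈ PB, ∀ z ∈ PW, (y, z) ∉ S → (z, y) ∈ S := fun y hy z hz hS => by
    have hyz : (y, z) ∈ B := by
      by_contra hB'
      exact hPB y hy (mem_clusters.2 ⟨z, fun h => h.elim hB' hS⟩)
    have hp : partner (y, z) = (z, y) :=
      if_neg fun (h : y = z) => disjoint_left.1 hdisj hy (h ▸ hz)
    by_contra hS'
    exact hPW z hz (mem_clusters.2 ⟨y, hp ▸ hB hyz (adj_partner hn _) (hp ▸ hS')⟩)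
  let f : (Fin n → Bool) × (Fin n → Bool) → Σ _ : Fin n → Bool, Fin n → Bool :=
    fun p => if (p.1, p.2) ∈ S then ⟨p.1, p.2⟩ else ⟨p.2, p.1⟩
  rw [← card_product, ← card_sigma]
  refine card_le_card_of_injOn f (fun p hp => ?_) (fun p hp q hq h => ?_)
  · rw [mem_coe, mem_product] at hp
    simp only [f, mem_coe, mem_sigma, mem_union, mem_fiber]
    split_ifs with hS
    · exact ⟨Or.inl hp.1, hS⟩
    · exact ⟨Or.inr hp.2, hswap _ hp.1 _ hp.2 hS⟩
  · rw [mem_coe, mem_product] at hp hq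
    have hne : ∀ {y z}, y ∈ PB → z ∈ PW → y ≠ z :=
      fun hy hz h => disjoint_left.1 hdisj hy (h ▸ hz)
    simp only [f] at h
    split_ifs at h <;> simp only [Sigma.mk.injEq, heq_eq_eq] at h
    · exact Prod.ext h.1 h.2
    · exact absurd h.1 (hne hp.1 hq.2)
    · exact absurd h.1.symm (hne hq.1 hp.2)
    · exact Prod.ext h.2 h.1

lemma two_le_card_clusters (hX : X.Nonempty) (h : ¬ ∃ x, ∀ z ∈ X, z.1 = x) :
    2 ≤ #(clusters X) := by
  by_contra hlt
  obtain ⟨⟨x, y⟩, hz⟩ := hX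
  exact h ⟨x, fun z hz' => card_le_one.1 (by omega) _ (mem_clusters.2 ⟨z.2, hz'⟩) _
    (mem_clusters.2 ⟨y, hz⟩)⟩

lemma le_ncard_of_notMem_clusters (hBS : Disjoint B S) {x : Fin n → Bool}
    (hxB : x ∉ clusters B) (hxW : x ∉ clusters (B ∪ S)ᶜ) : 2 ^ g * (n + 1 - g) ≤ S.ncard := by
  have hB0 : #(fiber B x) = 0 := card_eq_zero.2 <|
    eq_empty_of_forall_notMem fun y hy => hxB (mem_clusters.2 ⟨y, mem_fiber.1 hy⟩)
  have hW0 : #(fiber (B ∪ S)ᶜ x) = 0 := card_eq_zero.2 <|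
    eq_empty_of_forall_notMem fun y hy => hxW (mem_clusters.2 ⟨y, mem_fiber.1 hy⟩)
  have := card_fiber_add_card_fiber_add_card_fiber hBS x
  have := single_le_sum (fun x _ => Nat.zero_le #(fiber S x)) (mem_univ x)
  have := two_pow_mul_sub_le_two_pow_pred g (n + 1)
  rw [Nat.add_sub_cancel] at this
  rw [ncard_eq_sum_card_fiber]
  omega

/-- Each cluster met by both sides holds many vertices of `S`, and the clusters met by one
side only are paired up by crossing edges. -/
theorem le_ncard_of_not_forall_fst_eq (hn : 1 ≤ n) (hB : IsClosedOutside (HCN n) S B)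
    (hBS : Disjoint B S) (hdeg : ∀ v ∉ S, g ≤ ((HCN n).neighborSet v \ S).ncard)
    (hBne : B.Nonempty) (hWne : (B ∪ S)ᶜ.Nonempty) (hBsp : ¬ ∃ x, ∀ z ∈ B, z.1 = x)
    (hWsp : ¬ ∃ x, ∀ z ∈ (B ∪ S)ᶜ, z.1 = x) : 2 ^ g * (n + 1 - g) ≤ S.ncard := by
  set CB := clusters B
  set CW := clusters (B ∪ S)ᶜ
  by_cases hE : ∃ x, x ∉ CB ∧ x ∉ CW
  · obtain ⟨x, hxB, hxW⟩ := hE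
    exact le_ncard_of_notMem_clusters hBS hxB hxW
  rw [ncard_eq_sum_card_fiber]
  have hcover : #(CB \ CW) + #(CW \ CB) + #(CB ∩ CW) = 2 ^ n := by
    have hU : CB ∪ CW = univ := eq_univ_of_forall fun x => by
      by_contra hx
      exact hE ⟨x, fun h => hx (mem_union_left _ h), fun h => hx (mem_union_right _ h)⟩
    have h := card_union_add_card_inter CB CW
    rw [hU, card_univ, Fintype.card_fun, Fintype.card_bool, Fintype.card_fin] at h
    have := card_sdiff_add_card_inter CB CW
    have := inter_comm CW CB ▸ card_sdiff_add_card_inter CW CB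
    omega
  have hmixed :
      #(CB ∩ CW) * (2 ^ (g - 1) * (n - (g - 1))) ≤ ∑ x ∈ CB ∩ CW, #(fiber S x) :=
    card_nsmul_le_sum _ _ _ fun x hx =>
      card_fiber_le_of_mem_clusters hn hB hBS hdeg (mem_inter.1 hx).1 (mem_inter.1 hx).2
  have hpure : #(CB \ CW) * #(CW \ CB) ≤ ∑ x ∈ (CB \ CW) ∪ (CW \ CB), #(fiber S x) :=
    card_mul_card_le_sum_card_fiber hn hB (fun y hy => (mem_sdiff.1 hy).2)
      (fun z hz => (mem_sdiff.1 hz).2) disjoint_sdiff_sdiff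
  have hsplit :
      ∑ x ∈ (CB \ CW) ∪ (CW \ CB), #(fiber S x) + ∑ x ∈ CB ∩ CW, #(fiber S x) ≤
        ∑ x, #(fiber S x) := by
    rw [← sum_union (disjoint_union_left.2 ⟨disjoint_sdiff_inter CB CW,
      inter_comm CW CB ▸ disjoint_sdiff_inter CW CB⟩)]
    exact sum_le_sum_of_subset (subset_univ _)
  have hCB : 2 ≤ #CB := two_le_card_clusters hBne hBsp
  have hCW : 2 ≤ #CW := two_le_card_clusters hWne hWsp
  have hB' := card_sdiff_add_card_inter CB CW
  have hW' := card_sdiff_add_card_inter CW CB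
  rw [inter_comm] at hW'
  have := two_pow_mul_succ_sub_le_mul_add (g := g) hn (by omega) (by omega) hcover
  omega

theorem le_ncard_of_isRgCut (hn : 1 ≤ n) (hS : IsRgCut n g S) :
    2 ^ g * (n + 1 - g) ≤ S.ncard := by
  obtain ⟨hcut, hdeg⟩ := hS
  have hle := two_pow_mul_sub_le_two_pow_pred g (n + 1)
  rw [Nat.add_sub_cancel] at hle
  rcases SimpleGraph.exists_isClosedOutside_of_not_connected hcut with
    rfl | ⟨B, hB, hBS, hBne, hWne⟩
  · rw [Set.ncard_univ, Nat.card_eq_fintype_card, Fintype.card_prod, Fintype.card_fun,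
      Fintype.card_bool, Fintype.card_fin]
    exact hle.trans (Nat.le_mul_of_pos_left _ (Nat.two_pow_pos n))
  have hWS : Disjoint (B ∪ S)ᶜ S := Set.disjoint_left.2 fun _ h h' => h (Or.inr h')
  by_cases hBc : ∃ x, ∀ z ∈ B, z.1 = x
  · exact le_ncard_of_forall_fst_eq hn hB hBS hdeg hBne hBc.choose_spec
  by_cases hWc : ∃ x, ∀ z ∈ (B ∪ S)ᶜ, z.1 = x
  · exact le_ncard_of_forall_fst_eq hn hB.compl hWS hdeg hWne hWc.choose_spec
  exact le_ncard_of_not_forall_fst_eq hn hB hBS hdeg hBne hWne hBc hWc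

end LowerBound

end HCN

/-- κ^g(HCN_n) = 2^g (n+1-g) for n ≥ 1 and 0 ≤ g ≤ n-1. -/
theorem stmt_11 (n g : ℕ) (hn : 1 ≤ n) (hg : g ≤ n - 1) :
    (∃ S : Set (HVert n), IsRgCut n g S ∧ S.ncard = 2 ^ g * (n + 1 - g)) ∧
    (∀ S : Set (HVert n), IsRgCut n g S → 2 ^ g * (n + 1 - g) ≤ S.ncard) := by
  obtain ⟨D, -, rfl⟩ :=
    exists_subset_card_eq (show g ≤ #(univ : Finset (Fin n)) by simp; omega)
  exact ⟨⟨HCN.cutSet D, HCN.isRgCut_cutSet hn hg, by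
    rw [Set.ncard_coe_finset, HCN.card_cutSet hn]⟩, fun S hS => HCN.le_ncard_of_isRgCut hn hS⟩
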